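/- arXiv:2605.11449 — 2 statements merged into one kernel-verified Lean document; each statement's English description precedes it below -/
import Mathlib

section
/- Let (i_1,…,i_m) be a valid firing sequence in the Modified Kostant Game with active set I, let c^{(λ)} denote the configuration after the first λ moves, and set w_λ = s_{i_λ} ⋯ s_{i_1} (with w_0 = id). Then for every step λ, the total number of chips increases by exactly the I-height of the positive coroot w_{λ-1}^{-1}(α_{i_λ}^∨): |c^{(λ)}| − |c^{(λ-1)}| = ht_I(w_{λ-1}^{-1}(α_{i_λ}^∨)), and this quantity is a strictly positive integer. -/
open scoped Classical RealInnerProductSpace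

noncomputable section

variable {n d : ℕ}

/-- The pairing `⟨β, γ^∨⟩ = 2(β,γ)/(γ,γ)` of a vector with a coroot. -/
def rsPair (β γ : EuclideanSpace ℝ (Fin d)) : ℝ := 2 * ⟪β, γ⟫ / ⟪γ, γ⟫

/-- The coroot `γ^∨ = 2γ/(γ,γ)`. -/
def rsCoroot (γ : EuclideanSpace ℝ (Fin d)) : EuclideanSpace ℝ (Fin d) :=
  (2 / ⟪γ, γ⟫) • γ

/-- `⟨·, γ^∨⟩` as a linear functional. -/
def corootForm (γ : EuclideanSpace ℝ (Fin d)) : EuclideanSpace ℝ (Fin d) →ₗ[ℝ] ℝ where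
  toFun x := 2 * ⟪x, γ⟫ / ⟪γ, γ⟫
  map_add' x y := by simp only [inner_add_left]; ring
  map_smul' c x := by simp only [real_inner_smul_left, RingHom.id_apply, smul_eq_mul]; ring

/-- A finite reduced crystallographic root system in the Euclidean space `ℝ^d`, together with a
chosen base of simple roots `α 0, …, α (n-1)`: every root is an integral linear combination of
the simple roots with all coefficients nonnegative or all nonpositive. -/
structure RootSystemBase (n d : ℕ) : Type where
  Φ : Finset (EuclideanSpace ℝ (Fin d))
  α : Fin n → EuclideanSpace ℝ (Fin d)
  α_mem : ∀ i, α i ∈ Φ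
  nonzero : ∀ β ∈ Φ, β ≠ 0
  reduced : ∀ β ∈ Φ, ∀ t : ℝ, t • β ∈ Φ → t = 1 ∨ t = -1
  crystallographic : ∀ β ∈ Φ, ∀ γ ∈ Φ, ∃ k : ℤ, rsPair β γ = (k : ℝ)
  reflClosed : ∀ β ∈ Φ, ∀ γ ∈ Φ, β - rsPair β γ • γ ∈ Φ
  indep : LinearIndependent ℝ α
  base : ∀ β ∈ Φ, ∃ c : Fin n → ℤ,
    β = ∑ i, (c i : ℝ) • α i ∧ ((∀ i, 0 ≤ c i) ∨ (∀ i, c i ≤ 0))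

/-- The extended space `E' = E ⊕ ℝ^I`. -/
abbrev ExtSp (n d : ℕ) (I : Finset (Fin n)) : Type :=
  EuclideanSpace ℝ (Fin d) × ({p : Fin n // p ∈ I} → ℝ)

/-- The total source vector `β = ∑_{p ∈ I} β_p` in the extended space. -/
def betaVec (n d : ℕ) (I : Finset (Fin n)) : ExtSp n d I := (0, fun _ => 1)

namespace RootSystemBase

variable (R : RootSystemBase n d)

lemma alpha_ne_zero (i : Fin n) : R.α i ≠ 0 := R.nonzero _ (R.α_mem i)

lemma inner_alpha_ne_zero (i : Fin n) : ⟪R.α i, R.α i⟫ ≠ 0 := fun h =>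
  R.alpha_ne_zero i ((inner_self_eq_zero (𝕜 := ℝ)).mp h)

lemma corootForm_alpha_self (i : Fin n) : corootForm (R.α i) (R.α i) = 2 := by
  have h2 := R.inner_alpha_ne_zero i
  show 2 * ⟪R.α i, R.α i⟫ / ⟪R.α i, R.α i⟫ = 2
  rw [mul_div_assoc, div_self h2, mul_one]

/-- The simple reflection `s_i : x ↦ x - ⟨x, α_i^∨⟩ α_i` as a linear automorphism of `E`. -/
def sRefl (i : Fin n) :
    EuclideanSpace ℝ (Fin d) ≃ₗ[ℝ] EuclideanSpace ℝ (Fin d) :=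
  Module.reflection (R.corootForm_alpha_self i)

/-- The Weyl group `W`, as the subgroup of linear automorphisms of `E` generated by the
simple reflections. -/
def weyl : Subgroup (EuclideanSpace ℝ (Fin d) ≃ₗ[ℝ] EuclideanSpace ℝ (Fin d)) :=
  Subgroup.closure (Set.range R.sRefl)

/-- `wordProd [i₁, …, i_t] = s_{i₁} ⋯ s_{i_t}`. -/
def wordProd (l : List (Fin n)) :
    EuclideanSpace ℝ (Fin d) ≃ₗ[ℝ] EuclideanSpace ℝ (Fin d) :=
  (l.map R.sRefl).prod

/-- The Weyl group element `s_{i_t} ⋯ s_{i_1}` associated to the firing sequence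
`(i_1, …, i_t)`. -/
def seqProd (l : List (Fin n)) :
    EuclideanSpace ℝ (Fin d) ≃ₗ[ℝ] EuclideanSpace ℝ (Fin d) :=
  (l.reverse.map R.sRefl).prod

/-- The length function `ℓ` of the Coxeter system `(W, S)`: the minimal number of simple
reflections needed to express `w`. -/
def len (w : EuclideanSpace ℝ (Fin d) ≃ₗ[ℝ] EuclideanSpace ℝ (Fin d)) : ℕ :=
  sInf {t | ∃ l : List (Fin n), l.length = t ∧ R.wordProd l = w}

/-- The set `W^J` of minimal length representatives of `W/W_J`, for `J = S \ {s_i : i ∈ I}`: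
those `w ∈ W` with `ℓ(w s_j) > ℓ(w)` for all `j ∉ I`. -/
def minReps (I : Finset (Fin n)) :
    Set (EuclideanSpace ℝ (Fin d) ≃ₗ[ℝ] EuclideanSpace ℝ (Fin d)) :=
  {w | w ∈ R.weyl ∧ ∀ j, j ∉ I → R.len w < R.len (w * R.sRefl j)}

/-- The Cartan matrix `a_{uv} = ⟨α_u, α_v^∨⟩` (an integer by crystallinity). -/
def cartan (u v : Fin n) : ℤ := ⌊rsPair (R.α u) (R.α v)⌋

/-- The set `Φ⁺` of positive roots. -/
def posRoots : Finset (EuclideanSpace ℝ (Fin d)) :=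
  R.Φ.filter fun β => ∃ c : Fin n → ℤ, β = ∑ i, (c i : ℝ) • R.α i ∧ ∀ i, 0 ≤ c i

/-- The set `Φ_P⁺` of positive roots lying in the span of the simple roots `α_j`, `j ∈ P`. -/
def parPos (P : Finset (Fin n)) : Finset (EuclideanSpace ℝ (Fin d)) :=
  R.posRoots.filter fun β => β ∈ Submodule.span ℝ (R.α '' (P : Set (Fin n)))

/-- `∑_{u ≠ v} (−a_{uv}) c_u + [v ∈ I]`. -/
def chipBound (I : Finset (Fin n)) (c : Fin n → ℤ) (v : Fin n) : ℤ :=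
  (∑ u ∈ Finset.univ.erase v, -(R.cartan u v) * c u) + (if v ∈ I then 1 else 0)

/-- Vertex `v` is sad in the configuration `c` (Modified Kostant Game with active set `I`). -/
def Sad (I : Finset (Fin n)) (c : Fin n → ℤ) (v : Fin n) : Prop :=
  2 * c v < R.chipBound I c v

/-- Firing vertex `v`. -/
def fire (I : Finset (Fin n)) (c : Fin n → ℤ) (v : Fin n) : Fin n → ℤ :=
  Function.update c v (R.chipBound I c v - c v)

end RootSystemBase

/-- `ValidFrom R I c l`: starting from the configuration `c`, the sequence `l` fires a sad
vertex at each step. -/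
def RootSystemBase.ValidFrom (R : RootSystemBase n d) (I : Finset (Fin n)) :
    (Fin n → ℤ) → List (Fin n) → Prop
  | _, [] => True
  | c, v :: l => R.Sad I c v ∧ RootSystemBase.ValidFrom R I (R.fire I c v) l

namespace RootSystemBase

variable (R : RootSystemBase n d)

/-- A valid firing sequence: starts at the zero configuration and fires a sad vertex at
each step. -/
def Valid (I : Finset (Fin n)) (l : List (Fin n)) : Prop := R.ValidFrom I 0 l

/-- The configuration reached after playing the sequence `l` from the zero configuration. -/
def play (I : Finset (Fin n)) (l : List (Fin n)) : Fin n → ℤ :=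
  l.foldl (R.fire I) 0

/-- A maximal valid firing sequence: no vertex is sad in the final configuration. -/
def MaximalSeq (I : Finset (Fin n)) (l : List (Fin n)) : Prop :=
  R.Valid I l ∧ ∀ v, ¬ R.Sad I (R.play I l) v

/-- The (integer) coefficients of a vector in the basis of simple coroots, when they exist. -/
def corootCoeffs (x : EuclideanSpace ℝ (Fin d)) : Fin n → ℤ :=
  if h : ∃ k : Fin n → ℤ, x = ∑ j, (k j : ℝ) • rsCoroot (R.α j) then h.choose else 0

/-- The `I`-height of a (co)vector: the sum over `j ∈ I` of its coefficients in the basis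
of simple coroots. -/
def htI (I : Finset (Fin n)) (x : EuclideanSpace ℝ (Fin d)) : ℤ :=
  ∑ j ∈ I, R.corootCoeffs x j

end RootSystemBase

/-- The extended pairing `⟨·, α_i^∨⟩` on `E' = E ⊕ ℝ^I`, determined by
`⟨β_p, α_i^∨⟩ = −δ_{pi}`, as a linear functional. -/
def extForm (R : RootSystemBase n d) (I : Finset (Fin n)) (i : Fin n) :
    ExtSp n d I →ₗ[ℝ] ℝ :=
  (corootForm (R.α i)).comp (LinearMap.fst ℝ _ _) -
    (if h : i ∈ I then
      (LinearMap.proj (R := ℝ) (φ := fun _ : {p : Fin n // p ∈ I} => ℝ) ⟨i, h⟩).comp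
        (LinearMap.snd ℝ _ _)
    else 0)

namespace RootSystemBase

variable (R : RootSystemBase n d)

lemma extForm_apply (I : Finset (Fin n)) (i : Fin n) (x : ExtSp n d I) :
    extForm R I i x = corootForm (R.α i) x.1 - (if h : i ∈ I then x.2 ⟨i, h⟩ else 0) := by
  by_cases h : i ∈ I <;> simp [extForm, h]

lemma extForm_alpha (I : Finset (Fin n)) (i : Fin n) :
    extForm R I i ((R.α i, 0) : ExtSp n d I) = 2 := by
  rw [R.extForm_apply]
  simp [R.corootForm_alpha_self i]

/-- The simple reflection `s_i : x ↦ x − ⟨x, α_i^∨⟩ α_i` on the extended space `E'`. -/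
def extRefl (I : Finset (Fin n)) (i : Fin n) : ExtSp n d I ≃ₗ[ℝ] ExtSp n d I :=
  Module.reflection (R.extForm_alpha I i)

/-- The extended pairing `⟨x, α_i^∨⟩` for `x ∈ E'`. -/
def extPair (I : Finset (Fin n)) (x : ExtSp n d I) (i : Fin n) : ℝ := extForm R I i x

/-- The action of `s_{i_t} ⋯ s_{i_1}` on the extended space `E'`. -/
def extSeqProd (I : Finset (Fin n)) (l : List (Fin n)) : ExtSp n d I ≃ₗ[ℝ] ExtSp n d I :=
  (l.reverse.map (R.extRefl I)).prod

end RootSystemBase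

/-!
Write `e_v(c) = (∑_{u ≠ v} (−a_{uv}) c_u + [v ∈ I]) − 2 c_v`, so that `v` is sad iff `e_v(c) > 0`
and firing `v` adds exactly `e_v(c)` chips. Firing `i` changes these excesses by
`e_v ↦ e_v − a_{iv} e_i`, which is the rule `s_i(α_v^∨) = α_v^∨ − a_{iv} α_i^∨`. Since
`e_v(0) = [v ∈ I]`, induction along the sequence gives `e_v(c^{(λ)}) = ht_I(w_λ⁻¹ α_v^∨)`.
Sadness of the fired vertex makes this height positive, so some coroot coefficient of the coroot
`w_{λ-1}⁻¹ α_{i_λ}^∨` of the root `w_{λ-1}⁻¹ α_{i_λ}` is positive, and that root is positive.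
-/

namespace RootSystemBase

variable (R : RootSystemBase n d)

lemma rsPair_eq_cartan (u v : Fin n) : rsPair (R.α u) (R.α v) = R.cartan u v := by
  obtain ⟨k, hk⟩ := R.crystallographic _ (R.α_mem u) _ (R.α_mem v)
  rw [cartan, hk, Int.floor_intCast]

lemma cartan_self (v : Fin n) : R.cartan v v = 2 := by
  have h := R.rsPair_eq_cartan v v
  rw [rsPair, mul_div_assoc, div_self (R.inner_alpha_ne_zero v), mul_one] at h
  exact_mod_cast h.symm

lemma sRefl_apply (i : Fin n) (x : EuclideanSpace ℝ (Fin d)) :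
    R.sRefl i x = x - corootForm (R.α i) x • R.α i :=
  Module.reflection_apply _ _

lemma inner_sRefl_sRefl (i : Fin n) (x y : EuclideanSpace ℝ (Fin d)) :
    ⟪R.sRefl i x, R.sRefl i y⟫ = ⟪x, y⟫ := by
  have hq := R.inner_alpha_ne_zero i
  simp only [sRefl_apply, inner_sub_left, inner_sub_right, real_inner_smul_left,
    real_inner_smul_right, corootForm, LinearMap.coe_mk, AddHom.coe_mk,
    real_inner_comm (R.α i) x, real_inner_comm (R.α i) y]
  field_simp
  ring

lemma sRefl_mem (i : Fin n) {β : EuclideanSpace ℝ (Fin d)} (hβ : β ∈ R.Φ) :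
    R.sRefl i β ∈ R.Φ := by
  rw [R.sRefl_apply]
  exact R.reflClosed β hβ _ (R.α_mem i)

lemma sRefl_rsCoroot_alpha (i v : Fin n) :
    R.sRefl i (rsCoroot (R.α v)) = rsCoroot (R.α v) - (R.cartan i v : ℝ) • rsCoroot (R.α i) := by
  have hi := R.inner_alpha_ne_zero i
  have hv := R.inner_alpha_ne_zero v
  rw [← R.rsPair_eq_cartan, R.sRefl_apply]
  simp only [rsCoroot, rsPair, map_smul, smul_eq_mul, smul_smul, corootForm, LinearMap.coe_mk,
    AddHom.coe_mk, real_inner_comm (R.α v) (R.α i)]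
  congr 2
  field_simp

lemma seqProd_inv (l : List (Fin n)) : (R.seqProd l)⁻¹ = R.wordProd l := by
  simp only [seqProd, wordProd, List.prod_inv_reverse, List.map_reverse, List.map_map,
    List.reverse_reverse]
  rfl

lemma wordProd_append_singleton (l : List (Fin n)) (i : Fin n) :
    R.wordProd (l ++ [i]) = R.wordProd l * R.sRefl i := by
  simp [wordProd]

lemma wordProd_mem (l : List (Fin n)) {β : EuclideanSpace ℝ (Fin d)} (hβ : β ∈ R.Φ) :
    R.wordProd l β ∈ R.Φ := by
  induction l using List.reverseRecOn generalizing β with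
  | nil => exact hβ
  | append_singleton l i ih =>
    rw [R.wordProd_append_singleton]
    exact ih (R.sRefl_mem i hβ)

lemma wordProd_rsCoroot (l : List (Fin n)) (γ : EuclideanSpace ℝ (Fin d)) :
    R.wordProd l (rsCoroot γ) = rsCoroot (R.wordProd l γ) := by
  induction l using List.reverseRecOn generalizing γ with
  | nil => rfl
  | append_singleton l i ih =>
    rw [R.wordProd_append_singleton, LinearEquiv.mul_apply, LinearEquiv.mul_apply, ← ih]
    simp only [rsCoroot, map_smul, inner_sRefl_sRefl]

lemma linearIndependent_rsCoroot : LinearIndependent ℝ fun j => rsCoroot (R.α j) :=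
  R.indep.units_smul fun j => Units.mk0 (2 / ⟪R.α j, R.α j⟫)
    (div_ne_zero two_ne_zero (R.inner_alpha_ne_zero j))

lemma htI_sum_smul_rsCoroot (I : Finset (Fin n)) (k : Fin n → ℤ) :
    R.htI I (∑ j, (k j : ℝ) • rsCoroot (R.α j)) = ∑ j ∈ I, k j := by
  have hex : ∃ k' : Fin n → ℤ,
      ∑ j, (k j : ℝ) • rsCoroot (R.α j) = ∑ j, (k' j : ℝ) • rsCoroot (R.α j) := ⟨k, rfl⟩
  have hk : hex.choose = k := funext fun j => by
    exact_mod_cast Fintype.linearIndependent_iffₛ.1 R.linearIndependent_rsCoroot _ _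
      hex.choose_spec.symm j
  simp only [htI, corootCoeffs, dif_pos hex, hk]

/-- The `α`-coefficients of a root `γ` are those of `γ^∨` in the simple coroots rescaled by
the positive factors `⟪γ, γ⟫ / ⟪α_j, α_j⟫`; in particular they have the same signs. -/
lemma mem_posRoots_of_rsCoroot_eq {γ : EuclideanSpace ℝ (Fin d)} (hγ : γ ∈ R.Φ)
    {k : Fin n → ℤ} (hk : rsCoroot γ = ∑ j, (k j : ℝ) • rsCoroot (R.α j))
    {j₀ : Fin n} (hj₀ : 0 < k j₀) : γ ∈ R.posRoots := by
  obtain ⟨c, hc, hsign⟩ := R.base γ hγ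
  have hγγ : 0 < ⟪γ, γ⟫ := real_inner_self_pos.2 (R.nonzero γ hγ)
  have hcoeff : ∀ j, (c j : ℝ) = ⟪γ, γ⟫ / ⟪R.α j, R.α j⟫ * k j := by
    refine Fintype.linearIndependent_iffₛ.1 R.indep _ _ ?_
    calc ∑ j, (c j : ℝ) • R.α j = (⟪γ, γ⟫ / 2) • rsCoroot γ := by
          rw [← hc, rsCoroot, smul_smul, div_mul_div_cancel₀ two_ne_zero,
            div_self hγγ.ne', one_smul]
      _ = ∑ j, (⟪γ, γ⟫ / ⟪R.α j, R.α j⟫ * k j) • R.α j := by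
          rw [hk, Finset.smul_sum]
          refine Finset.sum_congr rfl fun j _ => ?_
          have := R.inner_alpha_ne_zero j
          simp only [rsCoroot, smul_smul]
          congr 1
          field_simp
  have hc₀ : 0 < c j₀ := by
    have hpos : (0 : ℝ) < ⟪γ, γ⟫ / ⟪R.α j₀, R.α j₀⟫ * k j₀ :=
      mul_pos (div_pos hγγ (real_inner_self_pos.2 (R.alpha_ne_zero j₀))) (by exact_mod_cast hj₀)
    exact_mod_cast (hcoeff j₀).symm ▸ hpos
  refine Finset.mem_filter.2 ⟨hγ, c, hc, hsign.resolve_right fun h => ?_⟩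
  exact (h j₀).not_gt hc₀

section Game

variable (I : Finset (Fin n))

/-- Twice the amount by which `c_v` falls short of the sadness threshold. -/
def excess (c : Fin n → ℤ) (v : Fin n) : ℤ := R.chipBound I c v - 2 * c v

lemma sad_iff_excess_pos (c : Fin n → ℤ) (v : Fin n) : R.Sad I c v ↔ 0 < R.excess I c v := by
  rw [Sad, excess, sub_pos]

lemma excess_zero (v : Fin n) : R.excess I 0 v = if v ∈ I then 1 else 0 := by
  simp [excess, chipBound]

lemma chipBound_fire (c : Fin n → ℤ) (i v : Fin n) :
    R.chipBound I (R.fire I c i) v =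
      R.chipBound I c v - if v = i then 0 else R.cartan i v * R.excess I c i := by
  split_ifs with hvi
  · subst hvi
    simp only [chipBound, sub_zero]
    congr 1
    exact Finset.sum_congr rfl fun u hu =>
      by rw [fire, Function.update_of_ne (Finset.ne_of_mem_erase hu)]
  · have hmem : i ∈ Finset.univ.erase v := Finset.mem_erase.2 ⟨Ne.symm hvi, Finset.mem_univ i⟩
    have hdiff : ∑ u ∈ Finset.univ.erase v, (-R.cartan u v * R.fire I c i u - -R.cartan u v * c u)
        = -(R.cartan i v * R.excess I c i) := by
      rw [Finset.sum_eq_single_of_mem i hmem]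
      · simp only [fire, Function.update_self, excess]; ring
      · intro u _ hui
        rw [fire, Function.update_of_ne hui, sub_self]
    rw [Finset.sum_sub_distrib] at hdiff
    simp only [chipBound]
    linarith

lemma excess_fire (c : Fin n → ℤ) (i v : Fin n) :
    R.excess I (R.fire I c i) v = R.excess I c v - R.cartan i v * R.excess I c i := by
  rw [excess, R.chipBound_fire]
  split_ifs with hvi
  · subst hvi
    simp only [fire, Function.update_self, cartan_self, excess]
    ring
  · simp only [fire, Function.update_of_ne hvi, excess]
    ring

lemma sum_fire_sub_sum (c : Fin n → ℤ) (v : Fin n) :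
    ∑ u, R.fire I c v u - ∑ u, c u = R.excess I c v := by
  rw [fire, Finset.sum_update_of_mem (Finset.mem_univ v),
    ← Finset.add_sum_erase _ _ (Finset.mem_univ v), excess, Finset.sdiff_singleton_eq_erase]
  ring

lemma play_append_singleton (l : List (Fin n)) (i : Fin n) :
    R.play I (l ++ [i]) = R.fire I (R.play I l) i :=
  List.foldl_append ..

lemma sad_foldl_of_validFrom {c : Fin n → ℤ} {l₁ l₂ : List (Fin n)} {v : Fin n}
    (h : R.ValidFrom I c (l₁ ++ v :: l₂)) : R.Sad I (l₁.foldl (R.fire I) c) v := by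
  induction l₁ generalizing c with
  | nil => exact h.1
  | cons a l ih => exact ih h.2

lemma exists_wordProd_rsCoroot_eq_and_excess_play (l : List (Fin n)) (v : Fin n) :
    ∃ k : Fin n → ℤ, R.wordProd l (rsCoroot (R.α v)) = ∑ j, (k j : ℝ) • rsCoroot (R.α j) ∧
      R.excess I (R.play I l) v = ∑ j ∈ I, k j := by
  induction l using List.reverseRecOn generalizing v with
  | nil =>
    refine ⟨Pi.single v 1, ?_, ?_⟩
    · simp [wordProd, Pi.single_apply]
    · simp [play, excess_zero, Pi.single_apply]
  | append_singleton l i ih =>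
    obtain ⟨kv, hkv, hev⟩ := ih v
    obtain ⟨ki, hki, hei⟩ := ih i
    refine ⟨kv - R.cartan i v • ki, ?_, ?_⟩
    · rw [R.wordProd_append_singleton, LinearEquiv.mul_apply, R.sRefl_rsCoroot_alpha, map_sub,
        map_smul, hkv, hki, Finset.smul_sum, ← Finset.sum_sub_distrib]
      refine Finset.sum_congr rfl fun j _ => ?_
      simp only [Pi.sub_apply, Pi.smul_apply, smul_eq_mul, Int.cast_sub, Int.cast_mul, sub_smul,
        smul_smul]
    · simp only [R.play_append_singleton, R.excess_fire, hev, hei, Pi.sub_apply, Pi.smul_apply,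
        smul_eq_mul, Finset.sum_sub_distrib, Finset.mul_sum]

end Game

end RootSystemBase

/-- At each step `λ` of a valid firing sequence, the total number of chips
increases by exactly the `I`-height of the positive coroot `w_{λ-1}⁻¹(α_{i_λ}^∨)`, a strictly
positive integer. -/
theorem statement7 {n d : ℕ} (R : RootSystemBase n d) (I : Finset (Fin n))
    (l₁ l₂ : List (Fin n)) (v : Fin n)
    (h : R.Valid I (l₁ ++ v :: l₂)) :
    (∃ γ ∈ R.posRoots, (R.seqProd l₁)⁻¹ (rsCoroot (R.α v)) = rsCoroot γ) ∧
    (∑ u, R.play I (l₁ ++ [v]) u) - (∑ u, R.play I l₁ u) =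
      R.htI I ((R.seqProd l₁)⁻¹ (rsCoroot (R.α v))) ∧
    0 < R.htI I ((R.seqProd l₁)⁻¹ (rsCoroot (R.α v))) := by
  obtain ⟨k, hk, hexcess⟩ := R.exists_wordProd_rsCoroot_eq_and_excess_play I l₁ v
  have hht : R.htI I ((R.seqProd l₁)⁻¹ (rsCoroot (R.α v))) = R.excess I (R.play I l₁) v := by
    rw [R.seqProd_inv, hk, R.htI_sum_smul_rsCoroot, hexcess]
  have hpos : 0 < R.excess I (R.play I l₁) v :=
    (R.sad_iff_excess_pos I _ v).1 (R.sad_foldl_of_validFrom I h)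
  refine ⟨?_, by rw [hht, R.play_append_singleton, R.sum_fire_sub_sum], hht ▸ hpos⟩
  obtain ⟨j₀, -, hj₀⟩ : ∃ j ∈ I, 0 < k j :=
    Finset.exists_lt_of_sum_lt (by simpa [← hexcess] using hpos)
  refine ⟨R.wordProd l₁ (R.α v), ?_, by rw [R.seqProd_inv, R.wordProd_rsCoroot]⟩
  exact R.mem_posRoots_of_rsCoroot_eq (R.wordProd_mem l₁ (R.α_mem v))
    (by rw [← R.wordProd_rsCoroot, hk]) hj₀
end
end

section
/- For any subset Δ_P ⊆ Δ of the simple roots of a finite crystallographic root system Φ with Δ_P ≠ Δ, one has |Δ \ Δ_P| · ( gcd_{β ∈ Δ \ Δ_P} ( Σ_{α ∈ Φ^+ \ Φ_{Δ_P}^+} ⟨α, β^∨⟩ ) − 1 ) ≤ |Φ^+ \ Φ_{Δ_P}^+|. -/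
open scoped Classical RealInnerProductSpace

noncomputable section

variable {n d : ℕ}

/-!
For a simple root `α_b ∉ Δ_P` and `γ ∈ Φ_P⁺` the pairing `⟨γ, α_b^∨⟩` is `≤ 0`, and the roots
`γ + α_b, …, γ - ⟨γ, α_b^∨⟩ α_b` lie on the unbroken `α_b`-string from `γ` to `s_b γ`. Together
with `α_b` they form a set `X_b ⊆ Φ⁺ \ Φ_P⁺` of size `1 - ∑_{γ ∈ Φ_P⁺} ⟨γ, α_b^∨⟩`. Since `s_b`
permutes `Φ⁺ \ {α_b}` and negates `⟨·, α_b^∨⟩`, we have `∑_{α ∈ Φ⁺} ⟨α, α_b^∨⟩ = 2`, so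
`n_b = |X_b| + 1`, which bounds the gcd. The coefficient of `α_b` shows that the sets `X_b` are
pairwise disjoint, hence `|Δ \ Δ_P| (gcd - 1) ≤ ∑_b |X_b| ≤ |Φ⁺ \ Φ_P⁺|`.
-/

open Submodule (span)

local notation "E" => EuclideanSpace ℝ (Fin d)

lemma corootForm_apply (γ x : E) : corootForm γ x = rsPair x γ := rfl

lemma rsPair_self {x : E} (hx : x ≠ 0) : rsPair x x = 2 := by
  have : ⟪x, x⟫ ≠ 0 := by simpa using hx
  unfold rsPair
  field_simp

lemma corootForm_injOn : Set.InjOn (corootForm (d := d)) {x | x ≠ 0} := by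
  intro γ hγ δ hδ h
  have hγ' : ⟪γ, γ⟫ ≠ 0 := by simpa using hγ
  have hδ' : ⟪δ, δ⟫ ≠ 0 := by simpa using hδ
  have h1 := LinearMap.congr_fun h γ
  have h2 := LinearMap.congr_fun h δ
  simp only [corootForm_apply, rsPair, real_inner_comm γ δ] at h1 h2
  field_simp at h1 h2
  rw [← sub_eq_zero, ← inner_self_eq_zero (𝕜 := ℝ)]
  simp only [inner_sub_left, inner_sub_right, real_inner_comm γ δ]
  linarith

lemma inner_self_reflection (β γ : E) (hγ : γ ≠ 0) :
    ⟪β - rsPair β γ • γ, β - rsPair β γ • γ⟫ = ⟪β, β⟫ := by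
  have hγ' : ⟪γ, γ⟫ ≠ 0 := by simpa using hγ
  simp only [rsPair, inner_sub_left, inner_sub_right, real_inner_smul_left,
    real_inner_smul_right, real_inner_comm γ β]
  field_simp
  ring

lemma corootForm_reflection {β γ : E} (hβ : β ≠ 0) (hγ : γ ≠ 0) :
    corootForm (β - rsPair β γ • γ) = corootForm β - rsPair γ β • corootForm γ := by
  have hβ' : ⟪β, β⟫ ≠ 0 := by simpa using hβ
  have hγ' : ⟪γ, γ⟫ ≠ 0 := by simpa using hγ
  ext x
  simp only [LinearMap.sub_apply, LinearMap.smul_apply, corootForm_apply, smul_eq_mul]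
  rw [rsPair, inner_self_reflection β γ hγ]
  simp only [inner_sub_right, real_inner_smul_right, rsPair, real_inner_comm γ β]
  field_simp

namespace RootSystemBase

variable (R : RootSystemBase n d)

/-- With the coroots `⟨·, γ^∨⟩` in the dual space, the roots form a crystallographic root pairing
in Mathlib's sense; this gives access to Mathlib's theory of root strings. -/
def toRootPairing : RootPairing R.Φ ℝ E (Module.Dual ℝ E) :=
  RootPairing.mk' (Module.Dual.eval ℝ E) (Function.Embedding.subtype (· ∈ R.Φ))
    ⟨fun x => corootForm x.1, fun x y h =>
      Subtype.ext (corootForm_injOn (R.nonzero _ x.2) (R.nonzero _ y.2) h)⟩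
    (fun x => rsPair_self (R.nonzero _ x.2))
    (by
      rintro γ - ⟨β, rfl⟩
      exact ⟨⟨_, R.reflClosed β.1 β.2 γ.1 γ.2⟩, rfl⟩)
    (by
      rintro γ - ⟨β, rfl⟩
      refine ⟨⟨_, R.reflClosed β.1 β.2 γ.1 γ.2⟩, ?_⟩
      exact corootForm_reflection (R.nonzero _ β.2) (R.nonzero _ γ.2))

@[simp]
lemma toRootPairing_root (x : R.Φ) : R.toRootPairing.root x = x := rfl

lemma toRootPairing_pairing (x y : R.Φ) : R.toRootPairing.pairing x y = rsPair x.1 y.1 := rfl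

instance : R.toRootPairing.IsCrystallographic where
  exists_value x y := by
    obtain ⟨k, hk⟩ := R.crystallographic x x.2 y y.2
    exact ⟨k, by rw [toRootPairing_pairing, hk]; rfl⟩

lemma cast_pairingIn (x y : R.Φ) : (R.toRootPairing.pairingIn ℤ x y : ℝ) = rsPair x.1 y.1 :=
  R.toRootPairing.algebraMap_pairingIn ℤ x y

lemma sub_mem_of_rsPair_pos {x y : E} (hx : x ∈ R.Φ) (hy : y ∈ R.Φ) (hne : x ≠ y)
    (h : 0 < rsPair x y) : x - y ∈ R.Φ := by
  have hpos : 0 < R.toRootPairing.pairingIn ℤ ⟨x, hx⟩ ⟨y, hy⟩ := by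
    rw [← Int.cast_pos (R := ℝ), cast_pairingIn]; exact h
  obtain ⟨z, hz⟩ :=
    R.toRootPairing.root_sub_root_mem_of_pairingIn_pos hpos (fun h => hne (congrArg Subtype.val h))
  exact hz ▸ z.2

lemma add_smul_mem_of_le_neg_rsPair {x y : E} (hx : x ∈ R.Φ) (hy : y ∈ R.Φ)
    (hli : LinearIndependent ℝ ![y, x]) {k : ℤ} (hk₀ : 0 ≤ k) (hk : (k : ℝ) ≤ -rsPair x y) :
    x + (k : ℝ) • y ∈ R.Φ := by
  set Q := R.toRootPairing
  set i : R.Φ := ⟨y, hy⟩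
  set j : R.Φ := ⟨x, hx⟩
  have hli' : LinearIndependent ℝ ![Q.root i, Q.root j] := hli
  have hmem : ∀ z : ℤ, x + (z : ℝ) • y ∈ R.Φ ↔
      z ∈ Set.Icc (-Q.chainBotCoeff i j : ℤ) (Q.chainTopCoeff i j) := fun z => by
    rw [← Q.root_add_zsmul_mem_range_iff hli', toRootPairing_root, toRootPairing_root,
      Int.cast_smul_eq_zsmul]
    exact ⟨fun h => ⟨⟨_, h⟩, rfl⟩, fun ⟨w, hw⟩ => hw ▸ w.2⟩
  have h₀ := (hmem 0).mp (by simpa using hx)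
  have hm := (hmem (-Q.pairingIn ℤ j i)).mp (by
    rw [Int.cast_neg, cast_pairingIn, neg_smul, ← sub_eq_add_neg]
    exact R.reflClosed x hx y hy)
  have hk' : k ≤ -Q.pairingIn ℤ j i := by
    rw [← Int.cast_le (R := ℝ), Int.cast_neg, cast_pairingIn]; exact hk
  exact (hmem k).mpr ⟨h₀.1.trans hk₀, hk'.trans hm.2⟩

def combination : (Fin n → ℤ) →+ E where
  toFun c := ∑ i, (c i : ℝ) • R.α i
  map_zero' := by simp
  map_add' c c' := by simp [add_smul, Finset.sum_add_distrib]

lemma combination_apply (c : Fin n → ℤ) : R.combination c = ∑ i, (c i : ℝ) • R.α i := rfl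

lemma combination_injective : Function.Injective R.combination := by
  intro c c' h
  rw [combination_apply, combination_apply] at h
  have := R.indep.fintypeLinearCombination_injective
    (a₁ := fun i => (c i : ℝ)) (a₂ := fun i => (c' i : ℝ)) (by
      simpa only [Fintype.linearCombination_apply] using h)
  exact funext fun i => by exact_mod_cast congrFun this i

lemma combination_single (b : Fin n) (t : ℤ) :
    R.combination (Pi.single b t) = (t : ℝ) • R.α b := by
  rw [combination_apply, Fintype.sum_eq_single b fun i hi => by simp [hi]]
  simp

lemma rsPair_combination (c : Fin n → ℤ) (y : E) :
    rsPair (R.combination c) y = ∑ i, c i * rsPair (R.α i) y := by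
  simp [← corootForm_apply, combination_apply, map_sum]

lemma smul_alpha_mem_span_iff {S : Set (Fin n)} {b : Fin n} (hb : b ∉ S) {t : ℝ} :
    t • R.α b ∈ span ℝ (R.α '' S) ↔ t = 0 := by
  refine ⟨fun h => by_contra fun ht => R.indep.notMem_span_image hb ?_, fun ht => by simp [ht]⟩
  simpa [smul_smul, inv_mul_cancel₀ ht] using Submodule.smul_mem _ t⁻¹ h

lemma eq_of_add_smul_alpha_eq {S : Set (Fin n)} {b : Fin n} (hb : b ∉ S) {γ γ' : E}
    (hγ : γ ∈ span ℝ (R.α '' S)) (hγ' : γ' ∈ span ℝ (R.α '' S)) {s t : ℝ}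
    (h : γ + s • R.α b = γ' + t • R.α b) : γ = γ' ∧ s = t := by
  have hst : (s - t) • R.α b ∈ span ℝ (R.α '' S) := by
    rw [sub_smul, show s • R.α b - t • R.α b = γ' - γ by
      rw [sub_eq_sub_iff_add_eq_add, add_comm, h, add_comm]]
    exact Submodule.sub_mem _ hγ' hγ
  have := sub_eq_zero.mp ((R.smul_alpha_mem_span_iff hb).mp hst)
  subst this
  exact ⟨add_right_cancel h, rfl⟩

lemma apply_eq_zero_of_combination_mem_span {S : Set (Fin n)} {b : Fin n} (hb : b ∉ S)
    {c : Fin n → ℤ} (h : R.combination c ∈ span ℝ (R.α '' S)) : c b = 0 := by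
  have hrest : R.combination (c - Pi.single b (c b)) ∈ span ℝ (R.α '' {b}ᶜ) := by
    rw [combination_apply]
    refine Submodule.sum_mem _ fun i _ => ?_
    rcases eq_or_ne i b with rfl | hi
    · simp only [Pi.sub_apply, Pi.single_eq_same, sub_self, Int.cast_zero, zero_smul]
      exact Submodule.zero_mem _
    · exact Submodule.smul_mem _ _ (Submodule.subset_span ⟨i, hi, rfl⟩)
  have hmono : span ℝ (R.α '' S) ≤ span ℝ (R.α '' {b}ᶜ) :=
    Submodule.span_mono (Set.image_mono fun i hi (hib : i = b) => hb (hib ▸ hi))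
  have hb' : (c b : ℝ) • R.α b ∈ span ℝ (R.α '' {b}ᶜ) := by
    rw [← combination_single, show Pi.single b (c b) = c - (c - Pi.single b (c b)) by abel,
      map_sub]
    exact Submodule.sub_mem _ (hmono h) hrest
  have := (R.smul_alpha_mem_span_iff (S := {b}ᶜ) (Set.notMem_compl_iff.mpr rfl)).mp hb'
  exact_mod_cast this

lemma mem_posRoots_iff {β : E} :
    β ∈ R.posRoots ↔ β ∈ R.Φ ∧ ∃ c, β = R.combination c ∧ 0 ≤ c :=
  Finset.mem_filter.trans <| and_congr_right' <|
    exists_congr fun _ => and_congr_right' Pi.le_def.symm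

lemma mem_posRoots_of_pos {β : E} (hβ : β ∈ R.Φ) {c : Fin n → ℤ} (hc : β = R.combination c)
    {i : Fin n} (hi : 0 < c i) : β ∈ R.posRoots := by
  obtain ⟨c', hc', hsign⟩ := R.base β hβ
  rw [← combination_apply] at hc'
  obtain rfl : c = c' := R.combination_injective (hc.symm.trans hc')
  refine R.mem_posRoots_iff.mpr ⟨hβ, c, hc, fun j => ?_⟩
  exact hsign.resolve_right (fun h => (h i).not_gt hi) j

lemma alpha_mem_posRoots (b : Fin n) : R.α b ∈ R.posRoots :=
  R.mem_posRoots_of_pos (R.α_mem b) (c := Pi.single b 1) (by simp [combination_single]) (i := b)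
    (by simp)

lemma rsPair_alpha_alpha_nonpos {i j : Fin n} (hij : i ≠ j) : rsPair (R.α i) (R.α j) ≤ 0 := by
  by_contra! hpos
  obtain ⟨c, hc, hsign⟩ := R.base _ <|
    R.sub_mem_of_rsPair_pos (R.α_mem i) (R.α_mem j) (R.indep.injective.ne hij) hpos
  rw [← combination_apply] at hc
  obtain rfl : Pi.single i 1 - Pi.single j 1 = c := R.combination_injective <| by
    simpa [combination_single] using hc
  rcases hsign with h | h
  · simpa [hij.symm] using h j
  · simpa [hij] using h i

lemma exists_pos_coeff_ne_of_mem_posRoots {β : E} (hβ : β ∈ R.posRoots) {b : Fin n}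
    (hne : β ≠ R.α b) : ∃ c, β = R.combination c ∧ ∃ i ≠ b, 0 < c i := by
  obtain ⟨hΦ, c, hc, hnn⟩ := R.mem_posRoots_iff.mp hβ
  refine ⟨c, hc, ?_⟩
  by_contra! h
  have hsingle : c = Pi.single b (c b) := funext fun i => by
    rcases eq_or_ne i b with rfl | hi
    · simp
    · simp [hi, le_antisymm (h i hi) (hnn i)]
  rw [hsingle, combination_single] at hc
  rcases R.reduced _ (R.α_mem b) _ (hc ▸ hΦ) with h1 | h1
  · exact hne (by rw [hc, h1, one_smul])
  · have : c b = -1 := by exact_mod_cast h1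
    exact absurd (hnn b) (by simp [this])

lemma rsPair_sub_smul_alpha (β : E) (t : ℝ) (b : Fin n) :
    rsPair (β - t • R.α b) (R.α b) = rsPair β (R.α b) - 2 * t := by
  rw [← corootForm_apply, map_sub, map_smul, corootForm_apply, corootForm_apply,
    rsPair_self (R.alpha_ne_zero b), smul_eq_mul]
  ring

lemma sub_rsPair_smul_mem_posRoots_erase {β : E} {b : Fin n}
    (hβ : β ∈ R.posRoots.erase (R.α b)) :
    β - rsPair β (R.α b) • R.α b ∈ R.posRoots.erase (R.α b) := by
  obtain ⟨hne, hpos⟩ := Finset.mem_erase.mp hβ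
  have hΦ := (R.mem_posRoots_iff.mp hpos).1
  obtain ⟨c, hc, i, hib, hi⟩ := R.exists_pos_coeff_ne_of_mem_posRoots hpos hne
  obtain ⟨p, hp⟩ := R.crystallographic β hΦ _ (R.α_mem b)
  have hcomb : β - rsPair β (R.α b) • R.α b = R.combination (c - Pi.single b p) := by
    rw [map_sub, combination_single, ← hc, hp]
  have hci : (c - Pi.single b p : Fin n → ℤ) i = c i := by simp [hib]
  refine Finset.mem_erase.mpr ⟨fun h => ?_,
    R.mem_posRoots_of_pos (R.reflClosed β hΦ _ (R.α_mem b)) hcomb (hci ▸ hi)⟩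
  have heq : c - Pi.single b p = Pi.single b 1 :=
    R.combination_injective (by rw [← hcomb, h, combination_single]; simp)
  have := congrFun heq i
  simp only [Pi.sub_apply, Pi.single_eq_of_ne hib, sub_zero] at this
  omega

lemma sum_rsPair_posRoots (b : Fin n) : ∑ β ∈ R.posRoots, rsPair β (R.α b) = 2 := by
  rw [← Finset.add_sum_erase _ _ (R.alpha_mem_posRoots b), rsPair_self (R.alpha_ne_zero b),
    add_eq_left]
  refine Finset.sum_involution (fun β _ => β - rsPair β (R.α b) • R.α b)
    (fun β _ => ?_) (fun β _ h heq => h ?_)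
    (fun β hβ => R.sub_rsPair_smul_mem_posRoots_erase hβ) (fun β _ => ?_)
  · rw [rsPair_sub_smul_alpha]; ring
  · simpa [R.alpha_ne_zero b] using heq
  · rw [rsPair_sub_smul_alpha]; module

lemma floor_rsPair_cast {x y : E} (hx : x ∈ R.Φ) (hy : y ∈ R.Φ) :
    (⌊rsPair x y⌋ : ℝ) = rsPair x y := by
  obtain ⟨k, hk⟩ := R.crystallographic x hx y hy
  rw [hk, Int.floor_intCast]

variable {P : Finset (Fin n)} {b : Fin n}

lemma mem_parPos_iff {γ : E} :
    γ ∈ R.parPos P ↔ γ ∈ R.posRoots ∧ γ ∈ span ℝ (R.α '' P) :=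
  Finset.mem_filter

lemma parPos_subset : R.parPos P ⊆ R.posRoots :=
  Finset.filter_subset _ _

lemma mem_Φ_of_mem_parPos {γ : E} (hγ : γ ∈ R.parPos P) : γ ∈ R.Φ :=
  (R.mem_posRoots_iff.mp (R.mem_parPos_iff.mp hγ).1).1

lemma rsPair_nonpos_of_mem_parPos (hb : b ∉ P) {γ : E} (hγ : γ ∈ R.parPos P) :
    rsPair γ (R.α b) ≤ 0 := by
  obtain ⟨hpos, hspan⟩ := R.mem_parPos_iff.mp hγ
  obtain ⟨-, c, rfl, hc⟩ := R.mem_posRoots_iff.mp hpos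
  have hcb := R.apply_eq_zero_of_combination_mem_span hb hspan
  rw [rsPair_combination]
  refine Finset.sum_nonpos fun i _ => ?_
  rcases eq_or_ne i b with rfl | hib
  · simp [hcb]
  · exact mul_nonpos_of_nonneg_of_nonpos (by exact_mod_cast hc i)
      (R.rsPair_alpha_alpha_nonpos hib)

lemma linearIndependent_alpha_of_mem_parPos (hb : b ∉ P) {γ : E} (hγ : γ ∈ R.parPos P) :
    LinearIndependent ℝ ![R.α b, γ] := by
  refine LinearIndependent.pair_iff.mpr fun s t h => ?_
  obtain rfl : s = 0 := (R.smul_alpha_mem_span_iff hb).mp <| by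
    rw [eq_neg_of_add_eq_zero_left h]
    exact Submodule.neg_mem _ (Submodule.smul_mem _ _ (R.mem_parPos_iff.mp hγ).2)
  simpa [R.nonzero γ (R.mem_Φ_of_mem_parPos hγ)] using h

lemma add_smul_alpha_mem_posRoots_sdiff (hb : b ∉ P) {γ : E} (hγ : γ ∈ R.parPos P) {k : ℤ}
    (hk : k ∈ Finset.Icc 1 (-⌊rsPair γ (R.α b)⌋)) :
    γ + (k : ℝ) • R.α b ∈ R.posRoots \ R.parPos P := by
  obtain ⟨hk₁, hk₂⟩ := Finset.mem_Icc.mp hk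
  obtain ⟨hpos, hspan⟩ := R.mem_parPos_iff.mp hγ
  obtain ⟨hΦ, c, hc, hnn⟩ := R.mem_posRoots_iff.mp hpos
  have hmem : γ + (k : ℝ) • R.α b ∈ R.Φ := by
    refine R.add_smul_mem_of_le_neg_rsPair hΦ (R.α_mem b)
      (R.linearIndependent_alpha_of_mem_parPos hb hγ) (by omega) ?_
    rw [← R.floor_rsPair_cast hΦ (R.α_mem b)]
    exact_mod_cast hk₂
  have hcb : 0 ≤ c b := hnn b
  refine Finset.mem_sdiff.mpr ⟨R.mem_posRoots_of_pos hmem (c := c + Pi.single b k)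
    (by rw [map_add, combination_single, hc]) (i := b) (by simp; omega), fun h => ?_⟩
  have hk₀ := (R.eq_of_add_smul_alpha_eq hb hspan (R.mem_parPos_iff.mp h).2 (s := k) (t := 0)
    (by simp)).2
  have : k = 0 := by exact_mod_cast hk₀
  omega

/-- The set `X_b` of the sketch above. -/
def stringSet (P : Finset (Fin n)) (b : Fin n) : Finset E :=
  insert (R.α b) (((R.parPos P).sigma fun γ => Finset.Icc 1 (-⌊rsPair γ (R.α b)⌋)).image
    fun p => p.1 + (p.2 : ℝ) • R.α b)

lemma stringSet_subset (hb : b ∉ P) : R.stringSet P b ⊆ R.posRoots \ R.parPos P := by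
  intro x hx
  rcases Finset.mem_insert.mp hx with rfl | hx
  · exact Finset.mem_sdiff.mpr ⟨R.alpha_mem_posRoots b,
      fun h => R.indep.notMem_span_image hb (R.mem_parPos_iff.mp h).2⟩
  · obtain ⟨⟨γ, k⟩, hγk, rfl⟩ := Finset.mem_image.mp hx
    obtain ⟨hγ, hk⟩ := Finset.mem_sigma.mp hγk
    exact R.add_smul_alpha_mem_posRoots_sdiff hb hγ hk

lemma exists_of_mem_stringSet {x : E} (hx : x ∈ R.stringSet P b) :
    ∃ γ ∈ span ℝ (R.α '' P), ∃ k : ℤ, 0 < k ∧ x = γ + (k : ℝ) • R.α b := by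
  rcases Finset.mem_insert.mp hx with rfl | hx
  · exact ⟨0, Submodule.zero_mem _, 1, one_pos, by simp⟩
  · obtain ⟨⟨γ, k⟩, hγk, rfl⟩ := Finset.mem_image.mp hx
    obtain ⟨hγ, hk⟩ := Finset.mem_sigma.mp hγk
    exact ⟨γ, (R.mem_parPos_iff.mp hγ).2, k, (Finset.mem_Icc.mp hk).1, rfl⟩

lemma disjoint_stringSet {b' : Fin n} (hb : b ∉ P) (hne : b ≠ b') :
    Disjoint (R.stringSet P b) (R.stringSet P b') := by
  refine Finset.disjoint_left.mpr fun x hx hx' => ?_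
  obtain ⟨γ, hγ, k, hk, rfl⟩ := R.exists_of_mem_stringSet hx
  obtain ⟨γ', hγ', k', -, h⟩ := R.exists_of_mem_stringSet hx'
  have hmono : span ℝ (R.α '' P) ≤ span ℝ (R.α '' insert b' (P : Set _)) :=
    Submodule.span_mono (Set.image_mono (Set.subset_insert _ _))
  have hγ'' : γ' + (k' : ℝ) • R.α b' ∈ span ℝ (R.α '' insert b' (P : Set _)) :=
    Submodule.add_mem _ (hmono hγ')
      (Submodule.smul_mem _ _ (Submodule.subset_span ⟨b', Set.mem_insert _ _, rfl⟩))
  have hk₀ := (R.eq_of_add_smul_alpha_eq (b := b) (by simp [hne, hb]) (hmono hγ) hγ'' (t := 0)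
    (by rw [h, zero_smul, add_zero])).2
  have : k = 0 := by exact_mod_cast hk₀
  omega

lemma card_stringSet (hb : b ∉ P) :
    ((R.stringSet P b).card : ℤ) = 1 + ∑ γ ∈ R.parPos P, -⌊rsPair γ (R.α b)⌋ := by
  have hinj : Set.InjOn (fun p : (_ : E) × ℤ => p.1 + (p.2 : ℝ) • R.α b)
      ((R.parPos P).sigma fun γ => Finset.Icc 1 (-⌊rsPair γ (R.α b)⌋)) := by
    rintro ⟨γ, k⟩ hγk ⟨γ', k'⟩ hγk' h
    obtain ⟨hγ, -⟩ := Finset.mem_sigma.mp hγk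
    obtain ⟨hγ', -⟩ := Finset.mem_sigma.mp hγk'
    obtain ⟨rfl, hkk⟩ :=
      R.eq_of_add_smul_alpha_eq hb (R.mem_parPos_iff.mp hγ).2 (R.mem_parPos_iff.mp hγ').2 h
    obtain rfl : k = k' := by exact_mod_cast hkk
    rfl
  have hnotMem : R.α b ∉ ((R.parPos P).sigma fun γ => Finset.Icc 1 (-⌊rsPair γ (R.α b)⌋)).image
      fun p => p.1 + (p.2 : ℝ) • R.α b := by
    intro h
    obtain ⟨⟨γ, k⟩, hγk, heq⟩ := Finset.mem_image.mp h
    obtain ⟨hγ, -⟩ := Finset.mem_sigma.mp hγk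
    have := (R.eq_of_add_smul_alpha_eq hb (R.mem_parPos_iff.mp hγ).2 (Submodule.zero_mem _)
      (t := 1) (by simpa using heq)).1
    exact R.nonzero γ (R.mem_Φ_of_mem_parPos hγ) this
  rw [stringSet, Finset.card_insert_of_notMem hnotMem, Finset.card_image_of_injOn hinj,
    Finset.card_sigma, add_comm]
  push_cast
  refine congrArg _ (Finset.sum_congr rfl fun γ hγ => ?_)
  rw [Int.card_Icc, add_sub_cancel_right, Int.toNat_of_nonneg]
  exact neg_nonneg.mpr (Int.floor_nonpos (R.rsPair_nonpos_of_mem_parPos hb hγ))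

lemma floor_sum_rsPair_posRoots_sdiff_parPos (hb : b ∉ P) :
    ⌊∑ β ∈ R.posRoots \ R.parPos P, rsPair β (R.α b)⌋ = (R.stringSet P b).card + 1 := by
  suffices h : ∑ β ∈ R.posRoots \ R.parPos P, rsPair β (R.α b) =
      (((R.stringSet P b).card + 1 : ℤ) : ℝ) by rw [h, Int.floor_intCast]
  rw [Finset.sum_sdiff_eq_sub R.parPos_subset, sum_rsPair_posRoots, card_stringSet _ hb]
  push_cast
  rw [Finset.sum_neg_distrib,
    Finset.sum_congr rfl fun γ hγ => R.floor_rsPair_cast (R.mem_Φ_of_mem_parPos hγ) (R.α_mem b)]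
  ring

end RootSystemBase

theorem statement16_general {n d : ℕ} (R : RootSystemBase n d) (P : Finset (Fin n)) :
    ((Finset.univ \ P).card : ℤ) *
        ((Finset.univ \ P).gcd
          (fun b => ⌊∑ a ∈ R.posRoots \ R.parPos P, rsPair a (R.α b)⌋) - 1)
      ≤ ((R.posRoots \ R.parPos P).card : ℤ) := by
  set I := Finset.univ \ P
  set g := I.gcd fun b => ⌊∑ a ∈ R.posRoots \ R.parPos P, rsPair a (R.α b)⌋
  have hI : ∀ b ∈ I, b ∉ P := fun b hb => (Finset.mem_sdiff.mp hb).2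
  have hg : ∀ b ∈ I, g - 1 ≤ (R.stringSet P b).card := fun b hb => by
    have hfb := R.floor_sum_rsPair_posRoots_sdiff_parPos (hI b hb)
    have hdvd : g ∣ (R.stringSet P b).card + 1 := hfb ▸ Finset.gcd_dvd hb
    have := Int.le_of_dvd (by omega) hdvd
    omega
  calc (I.card : ℤ) * (g - 1) = ∑ _b ∈ I, (g - 1) := by rw [Finset.sum_const, nsmul_eq_mul]
    _ ≤ ∑ b ∈ I, ((R.stringSet P b).card : ℤ) := Finset.sum_le_sum hg
    _ = (I.biUnion (R.stringSet P)).card := by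
      rw [Finset.card_biUnion fun b hb b' _ hne => R.disjoint_stringSet (hI b hb) hne]
      push_cast; rfl
    _ ≤ (R.posRoots \ R.parPos P).card := by
      exact_mod_cast Finset.card_le_card
        (Finset.biUnion_subset.mpr fun b hb => R.stringSet_subset (hI b hb))

/-- For any proper subset `Δ_P ⊊ Δ` of the simple roots,
`|Δ \\ Δ_P| · (gcd_{β ∈ Δ \\ Δ_P} (∑_{α ∈ Φ⁺ \\ Φ_{Δ_P}⁺} ⟨α, β^∨⟩) − 1) ≤ |Φ⁺ \\ Φ_{Δ_P}⁺|`. -/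
theorem statement16 {n d : ℕ} (R : RootSystemBase n d) (P : Finset (Fin n))
    (hP : P ≠ Finset.univ) :
    ((Finset.univ \ P).card : ℤ) *
        ((Finset.univ \ P).gcd
          (fun b => ⌊∑ a ∈ R.posRoots \ R.parPos P, rsPair a (R.α b)⌋) - 1)
      ≤ ((R.posRoots \ R.parPos P).card : ℤ) :=
  statement16_general R P
end
end
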